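/- arXiv:1409.5900 — 9 statements merged into one kernel-verified Lean document; each statement's English description precedes it below -/
import Mathlib

section
/- Let f : 2^N → ℝ be submodular with multilinear extension F. For every three vectors z ≤ y ≤ x in [0,1]^N (coordinate-wise), F(x) − F(y) ≤ F(x − z) − F(y − z). -/
open Finset

/-- The multilinear extension `F(x) = E[f(R(x))]` of a set function `f`. -/
noncomputable def multilinearExt {N : Type*} [Fintype N] [DecidableEq N]
    (f : Finset N → ℝ) (x : N → ℝ) : ℝ :=
  ∑ S : Finset N, (∏ u ∈ S, x u) * (∏ u ∈ Sᶜ, (1 - x u)) * f S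

/-!
`F` is affine in each coordinate `u`, with slope `∂ᵤF` the multilinear extension of the marginal
`S ↦ f (S ∪ {u}) - f (S \ {u})`, which does not depend on coordinate `u`. Submodularity makes this
marginal antitone, hence `∂ᵤF` is antitone on `[0,1]^N`. Lowering coordinate `u` of both `x` and
`y` by `δ ≥ 0` therefore changes `F x - F y` by `δ (∂ᵤF y - ∂ᵤF x) ≥ 0`; subtracting `z` one
coordinate at a time gives the claim.
-/

open Function

theorem monotoneOn_Icc_of_update {ι α β : Type*} [Fintype ι] [DecidableEq ι] [Preorder α]
    [Preorder β] {Φ : (ι → α) → β} {lo hi : ι → α}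
    (h : ∀ w ∈ Set.Icc lo hi, ∀ i t, w i ≤ t → t ≤ hi i → Φ w ≤ Φ (update w i t)) :
    MonotoneOn Φ (Set.Icc lo hi) := by
  intro a ha b hb hab
  have key : ∀ s : Finset ι, Φ a ≤ Φ (s.piecewise b a) := by
    intro s
    induction s using Finset.induction_on with
    | empty => simp
    | insert i s his ih =>
      rw [piecewise_insert]
      have hmem : s.piecewise b a ∈ Set.Icc lo hi := piecewise_mem_Icc_of_mem_of_mem _ hb ha
      exact ih.trans (h _ hmem i (b i) (by simp [his, hab i]) (hb.2 i))
  simpa using key univ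

section Marginal

variable {N : Type*} [DecidableEq N]

def marginal (f : Finset N → ℝ) (u : N) (S : Finset N) : ℝ :=
  f (insert u S) - f (S.erase u)

theorem marginal_nonpos_of_antitone {f : Finset N → ℝ} (hf : Antitone f) (u : N)
    (S : Finset N) : marginal f u S ≤ 0 :=
  sub_nonpos.2 (hf ((erase_subset u S).trans (subset_insert u S)))

theorem antitone_marginal {f : Finset N → ℝ}
    (hf : ∀ A B : Finset N, f A + f B ≥ f (A ∪ B) + f (A ∩ B)) (u : N) :
    Antitone (marginal f u) := by
  intro S T hST
  have hunion : insert u S ∪ T.erase u = insert u T := by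
    ext v; have := @hST v; grind
  have hinter : insert u S ∩ T.erase u = S.erase u := by
    ext v; have := @hST v; grind
  have := hf (insert u S) (T.erase u)
  rw [hunion, hinter] at this
  simp only [marginal]
  linarith

end Marginal

section MultilinearExt

variable {N : Type*} [Fintype N] [DecidableEq N]

theorem multilinearExt_update (f : Finset N → ℝ) (w : N → ℝ) (u : N) (t : ℝ) :
    multilinearExt f (update w u t) =
      ∑ T ∈ (univ.erase u).powerset, (∏ v ∈ T, w v) * (∏ v ∈ (insert u T)ᶜ, (1 - w v)) *
        ((1 - t) * f T + t * f (insert u T)) := by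
  have huniv : (univ : Finset (Finset N)) = (insert u (univ.erase u)).powerset := by
    rw [insert_erase (mem_univ u), powerset_univ]
  unfold multilinearExt
  rw [huniv, sum_powerset_insert (notMem_erase u univ), ← sum_add_distrib]
  refine sum_congr rfl fun T hT => ?_
  have hu : u ∉ T := fun h => notMem_erase u univ (mem_powerset.mp hT h)
  have hneg : ∀ v, 1 - update w u t v = update (fun v => 1 - w v) u (1 - t) v := fun v => by
    by_cases hv : v = u <;> simp [hv]
  simp only [hneg, prod_update_of_mem (mem_insert_self u T), prod_update_of_notMem hu,
    prod_update_of_mem (mem_compl.mpr hu), compl_insert, sdiff_singleton_eq_erase,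
    erase_insert hu, prod_update_of_notMem (notMem_erase u _)]
  ring

theorem multilinearExt_update_sub (f : Finset N → ℝ) (w : N → ℝ) (u : N) (t : ℝ) :
    multilinearExt f (update w u t) - multilinearExt f w =
      (t - w u) * multilinearExt (marginal f u) w := by
  conv_lhs => arg 2; rw [← update_eq_self u w]
  conv_rhs => arg 2; rw [← update_eq_self u w]
  simp only [multilinearExt_update, mul_sum, ← sum_sub_distrib]
  refine sum_congr rfl fun T hT => ?_
  have hu : u ∉ T := fun h => notMem_erase u univ (mem_powerset.mp hT h)
  simp only [marginal, insert_idem, erase_insert hu, erase_eq_of_notMem hu]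
  ring

theorem multilinearExt_nonpos {g : Finset N → ℝ} (hg : ∀ S, g S ≤ 0) {w : N → ℝ}
    (hw : w ∈ Set.Icc 0 1) : multilinearExt g w ≤ 0 :=
  sum_nonpos fun S _ => mul_nonpos_of_nonneg_of_nonpos
    (mul_nonneg (prod_nonneg fun v _ => hw.1 v) (prod_nonneg fun v _ => sub_nonneg.2 (hw.2 v)))
    (hg S)

theorem multilinearExt_antitoneOn {g : Finset N → ℝ} (hg : Antitone g) :
    AntitoneOn (multilinearExt g) (Set.Icc 0 1) := by
  refine monotoneOn_toDual_comp_iff.mp (monotoneOn_Icc_of_update fun w hw i t hwt _ => ?_)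
  have hslope := multilinearExt_nonpos (marginal_nonpos_of_antitone hg i) hw
  have hstep := multilinearExt_update_sub g w i t
  have := mul_nonpos_of_nonneg_of_nonpos (sub_nonneg.2 hwt) hslope
  show multilinearExt g (update w i t) ≤ multilinearExt g w
  linarith

theorem monotoneOn_multilinearExt_sub_sub {f : Finset N → ℝ}
    (hf : ∀ A B : Finset N, f A + f B ≥ f (A ∪ B) + f (A ∩ B)) {x y : N → ℝ} (hyx : y ≤ x)
    (hx1 : x ≤ 1) :
    MonotoneOn (fun w => multilinearExt f (x - w) - multilinearExt f (y - w)) (Set.Icc 0 y) := by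
  refine monotoneOn_Icc_of_update fun w hw i t hwt _ => ?_
  have hshift : ∀ a : N → ℝ, a - update w i t = update (a - w) i (a i - t) := fun a => by
    rw [update_sub, update_eq_self]
  have hslope : multilinearExt (marginal f i) (x - w) ≤ multilinearExt (marginal f i) (y - w) :=
    multilinearExt_antitoneOn (antitone_marginal hf i)
      ⟨sub_nonneg.2 hw.2, (sub_le_self y hw.1).trans (hyx.trans hx1)⟩
      ⟨sub_nonneg.2 (hw.2.trans hyx), (sub_le_self x hw.1).trans hx1⟩ (sub_le_sub_right hyx w)
  have hx := multilinearExt_update_sub f (x - w) i (x i - t)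
  have hy := multilinearExt_update_sub f (y - w) i (y i - t)
  have := mul_le_mul_of_nonpos_left hslope (sub_nonpos.2 hwt)
  simp only [hshift]
  simp only [Pi.sub_apply] at hx hy
  linarith

end MultilinearExt

/-- for submodular `f` and `z ≤ y ≤ x` in `[0,1]^N`,
`F(x) − F(y) ≤ F(x − z) − F(y − z)`. -/
theorem multilinearExt_diff_mono {N : Type*} [Fintype N] [DecidableEq N]
    (f : Finset N → ℝ)
    (hf : ∀ A B : Finset N, f A + f B ≥ f (A ∪ B) + f (A ∩ B))
    (x y z : N → ℝ)
    (hz : ∀ u, 0 ≤ z u) (hzy : ∀ u, z u ≤ y u) (hyx : ∀ u, y u ≤ x u)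
    (hx1 : ∀ u, x u ≤ 1) :
    multilinearExt f x - multilinearExt f y ≤
      multilinearExt f (fun u => x u - z u) - multilinearExt f (fun u => y u - z u) := by
  have h := monotoneOn_multilinearExt_sub_sub hf hyx hx1
    ⟨le_rfl, fun u => (hz u).trans (hzy u)⟩ ⟨hz, hzy⟩ hz
  simp only [sub_zero] at h
  exact h
end

section
/- Let f : 2^N → ℝ≥0 be a non-negative symmetric submodular function with multilinear extension F, let S ⊆ N, and let x ∈ [0,1]^N be a vector such that F(y) ≤ F(x) for every y ∈ [0,1]^N with y ≤ x coordinate-wise. Then F(1_S ∨ x) ≥ f(S) − F(x). -/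
/-!
Let `y` be `x` with the coordinates in `S` set to `0`. Then `1_S ∨ x = 1_S ∨ y`, and the random set
`R(1_S ∨ y)` is `S ∪ R(y)` with `R(y)` disjoint from `S`. For `T` disjoint from `S`, submodularity
applied to `S ∪ T` and `Tᶜ`, together with `f(Tᶜ) = f(T)` and `f(N) ≥ 0`, gives
`f(S ∪ T) ≥ f(S) - f(T)`. Taking expectations, `F(1_S ∨ x) ≥ f(S) - F(y) ≥ f(S) - F(x)`, the last
step by the local maximality of `x` since `y ≤ x`.
-/

open Finset

section

variable {N : Type*} [Fintype N] [DecidableEq N]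

def roundingProb {R : Type*} [CommRing R] (x : N → R) (T : Finset N) : R :=
  (∏ u ∈ T, x u) * ∏ u ∈ Tᶜ, (1 - x u)

theorem multilinearExt_eq_sum_roundingProb (f : Finset N → ℝ) (x : N → ℝ) :
    multilinearExt f x = ∑ T, roundingProb x T * f T :=
  rfl

theorem roundingProb_eq_prod_ite {R : Type*} [CommRing R] (x : N → R) (T : Finset N) :
    roundingProb x T = ∏ u, if u ∈ T then x u else 1 - x u := by
  rw [prod_ite, roundingProb]
  congr 2 <;> ext u <;> simp

theorem sum_roundingProb {R : Type*} [CommRing R] (x : N → R) :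
    ∑ T, roundingProb x T = 1 := by
  simp [roundingProb, ← Fintype.prod_add]

theorem roundingProb_nonneg {x : N → ℝ} (hx : ∀ u, 0 ≤ x u ∧ x u ≤ 1) (T : Finset N) :
    0 ≤ roundingProb x T :=
  mul_nonneg (prod_nonneg fun u _ => (hx u).1) (prod_nonneg fun u _ => sub_nonneg.2 (hx u).2)

theorem roundingProb_eq_zero_of_mem {R : Type*} [CommRing R] {x : N → R} {T : Finset N}
    {u : N} (hu : u ∈ T) (hxu : x u = 0) : roundingProb x T = 0 := by
  rw [roundingProb_eq_prod_ite]
  exact prod_eq_zero (mem_univ u) (by simp [hu, hxu])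

theorem roundingProb_eq_zero_of_notMem {R : Type*} [CommRing R] {x : N → R} {T : Finset N}
    {u : N} (hu : u ∉ T) (hxu : x u = 1) : roundingProb x T = 0 := by
  rw [roundingProb_eq_prod_ite]
  exact prod_eq_zero (mem_univ u) (by simp [hu, hxu])

theorem roundingProb_piecewise_one_union {R : Type*} [CommRing R] (x : N → R) {S T : Finset N}
    (hST : Disjoint S T) :
    roundingProb (S.piecewise 1 x) (S ∪ T) = roundingProb (S.piecewise 0 x) T := by
  simp only [roundingProb_eq_prod_ite]
  refine prod_congr rfl fun u _ => ?_
  by_cases hu : u ∈ S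
  · simp [hu, disjoint_left.1 hST hu]
  · simp [hu]

theorem multilinearExt_piecewise_one (f : Finset N → ℝ) (S : Finset N) (x : N → ℝ) :
    multilinearExt f (S.piecewise 1 x) = ∑ T, roundingProb (S.piecewise 0 x) T * f (S ∪ T) := by
  -- `T ↦ T ∆ S` sends the sets disjoint from `S`, the only ones of positive weight on the right,
  -- to the sets containing `S`, the only ones of positive weight on the left.
  have hinv : Function.Involutive (symmDiff · S) := fun T => symmDiff_symmDiff_cancel_right S T
  rw [multilinearExt_eq_sum_roundingProb]
  refine (Fintype.sum_bijective _ hinv.bijective _ _ fun T => ?_).symm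
  by_cases hST : Disjoint S T
  · rw [symmDiff_comm, hST.symmDiff_eq_sup, sup_eq_union, roundingProb_piecewise_one_union x hST]
  · obtain ⟨u, huS, huT⟩ := not_disjoint_iff.1 hST
    rw [roundingProb_eq_zero_of_mem huT (by simp [huS]),
      roundingProb_eq_zero_of_notMem (u := u) (by simp [mem_symmDiff, huS, huT]) (by simp [huS]),
      zero_mul, zero_mul]

theorem apply_sdiff_le_apply_union_add_apply {f : Finset N → ℝ}
    (huniv : 0 ≤ f univ) (hsym : ∀ S : Finset N, f S = f Sᶜ)
    (hsub : ∀ A B : Finset N, f A + f B ≥ f (A ∪ B) + f (A ∩ B)) (S T : Finset N) :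
    f (S \ T) ≤ f (S ∪ T) + f T := by
  have h := hsub (S ∪ T) Tᶜ
  rw [union_assoc, union_compl, union_eq_right.2 (subset_univ S), union_inter_distrib_right,
    inter_compl, union_empty, ← sdiff_eq_inter_compl, ← hsym] at h
  linarith

theorem sub_multilinearExt_le_sum_roundingProb_mul_union {f : Finset N → ℝ}
    (huniv : 0 ≤ f univ) (hsym : ∀ S : Finset N, f S = f Sᶜ)
    (hsub : ∀ A B : Finset N, f A + f B ≥ f (A ∪ B) + f (A ∩ B)) {S : Finset N} {y : N → ℝ}
    (hy : ∀ u, 0 ≤ y u ∧ y u ≤ 1) (hyS : ∀ u ∈ S, y u = 0) :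
    f S - multilinearExt f y ≤ ∑ T, roundingProb y T * f (S ∪ T) := by
  have hround (T : Finset N) : roundingProb y T * (f S - f T) ≤ roundingProb y T * f (S ∪ T) := by
    by_cases hST : Disjoint S T
    · refine mul_le_mul_of_nonneg_left ?_ (roundingProb_nonneg hy T)
      have := apply_sdiff_le_apply_union_add_apply huniv hsym hsub S T
      rw [sdiff_eq_self_of_disjoint hST] at this
      linarith
    · obtain ⟨u, huS, huT⟩ := not_disjoint_iff.1 hST
      rw [roundingProb_eq_zero_of_mem huT (hyS u huS), zero_mul, zero_mul]
  calc f S - multilinearExt f y = ∑ T, roundingProb y T * (f S - f T) := by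
        simp only [mul_sub, sum_sub_distrib, ← sum_mul, sum_roundingProb, one_mul,
          multilinearExt_eq_sum_roundingProb]
    _ ≤ ∑ T, roundingProb y T * f (S ∪ T) := sum_le_sum fun T _ => hround T

end

/-- for a non-negative symmetric submodular `f`, a set `S`, and a vector
`x ∈ [0,1]^N` such that `F(y) ≤ F(x)` for every `y ≤ x` in `[0,1]^N`, we have
`F(1_S ∨ x) ≥ f(S) − F(x)`. -/
theorem union_bound_symmetric {N : Type*} [Fintype N] [DecidableEq N]
    (f : Finset N → ℝ)
    (hnonneg : ∀ S : Finset N, 0 ≤ f S)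
    (hsym : ∀ S : Finset N, f S = f Sᶜ)
    (hsub : ∀ A B : Finset N, f A + f B ≥ f (A ∪ B) + f (A ∩ B))
    (S : Finset N) (x : N → ℝ) (hx : ∀ u, 0 ≤ x u ∧ x u ≤ 1)
    (hmax : ∀ y : N → ℝ, (∀ u, 0 ≤ y u ∧ y u ≤ x u) →
      multilinearExt f y ≤ multilinearExt f x) :
    multilinearExt f (fun u => max (if u ∈ S then (1 : ℝ) else 0) (x u)) ≥
      f S - multilinearExt f x := by
  set y : N → ℝ := S.piecewise 0 x
  have hy : ∀ u, 0 ≤ y u ∧ y u ≤ x u := fun u => by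
    by_cases hu : u ∈ S <;> simp [y, hu, (hx u).1]
  have hsup :
      (fun u => max (if u ∈ S then (1 : ℝ) else 0) (x u)) = S.piecewise (1 : N → ℝ) x := by
    ext u; by_cases hu : u ∈ S <;> simp [hu, (hx u).1, (hx u).2]
  calc f S - multilinearExt f x ≤ f S - multilinearExt f y := by linarith [hmax y hy]
    _ ≤ ∑ T, roundingProb y T * f (S ∪ T) :=
      sub_multilinearExt_le_sum_roundingProb_mul_union (hnonneg univ) hsym hsub
        (fun u => ⟨(hy u).1, (hy u).2.trans (hx u).2⟩) fun u hu => by simp [y, hu]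
    _ = _ := by rw [hsup, multilinearExt_piecewise_one]
end

section
/- Let f : 2^N → ℝ be a submodular function and A ⊆ N. Denote by A(p) a random subset of A where each element appears independently with probability p. Then E[f(A(p))] ≥ (1 − p)·f(∅) + p·f(A). -/
open Finset

/-!
Induct on `A`. Adding a new element `a` splits the random subset according to whether it
contains `a`: `E[f((A ∪ {a})(p))] = (1 - p) E[f(A(p))] + p E[f(A(p) ∪ {a})]`. Both `f` and
`S ↦ f (insert a S)` are submodular, so the induction hypothesis bounds the two terms, and the
remaining inequality `f A + f {a} ≥ f (A ∪ {a}) + f ∅` is submodularity itself.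
-/

section

variable {N : Type*}

/-- `randomSubsetExpectation p A g` is `E[g(A(p))]`. -/
def randomSubsetExpectation (p : ℝ) (A : Finset N) (g : Finset N → ℝ) : ℝ :=
  ∑ B ∈ A.powerset, p ^ B.card * (1 - p) ^ (A.card - B.card) * g B

@[simp]
theorem randomSubsetExpectation_empty (p : ℝ) (g : Finset N → ℝ) :
    randomSubsetExpectation p ∅ g = g ∅ := by
  simp [randomSubsetExpectation]

theorem randomSubsetExpectation_insert [DecidableEq N] (p : ℝ) {a : N} {A : Finset N}
    (ha : a ∉ A) (g : Finset N → ℝ) :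
    randomSubsetExpectation p (insert a A) g =
      (1 - p) * randomSubsetExpectation p A g +
        p * randomSubsetExpectation p A (fun S => g (insert a S)) := by
  rw [randomSubsetExpectation, sum_powerset_insert ha, card_insert_of_notMem ha,
    randomSubsetExpectation, randomSubsetExpectation, mul_sum, mul_sum]
  congr 1 <;> refine sum_congr rfl fun B hB => ?_
  · rw [Nat.succ_sub (card_le_card (mem_powerset.mp hB)), pow_succ]
    ring
  · rw [card_insert_of_notMem fun h => ha (mem_powerset.mp hB h), Nat.add_sub_add_right,
      pow_succ]
    ring

theorem submodular_comp_insert [DecidableEq N] {f : Finset N → ℝ}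
    (hf : ∀ S T : Finset N, f S + f T ≥ f (S ∪ T) + f (S ∩ T)) (a : N) (S T : Finset N) :
    f (insert a S) + f (insert a T) ≥ f (insert a (S ∪ T)) + f (insert a (S ∩ T)) := by
  have := hf (insert a S) (insert a T)
  rwa [insert_union, union_insert, insert_idem, ← insert_inter_distrib] at this

theorem randomSubsetExpectation_ge_of_submodular [DecidableEq N] {f : Finset N → ℝ}
    (hf : ∀ S T : Finset N, f S + f T ≥ f (S ∪ T) + f (S ∩ T)) (A : Finset N) {p : ℝ}
    (hp0 : 0 ≤ p) (hp1 : p ≤ 1) :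
    randomSubsetExpectation p A f ≥ (1 - p) * f ∅ + p * f A := by
  induction A using Finset.induction_on generalizing f with
  | empty => rw [randomSubsetExpectation_empty]; linarith
  | @insert a A ha ih =>
    rw [randomSubsetExpectation_insert p ha]
    have h_without_a := ih hf
    have h_with_a := ih (submodular_comp_insert hf a)
    have h_split : f A + f {a} ≥ f (insert a A) + f ∅ := by
      simpa [union_comm A, ← insert_eq, inter_comm A, singleton_inter_of_notMem ha] using
        hf A {a}
    simp only [insert_empty] at h_with_a
    nlinarith [mul_le_mul_of_nonneg_left h_without_a (sub_nonneg.mpr hp1),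
      mul_le_mul_of_nonneg_left h_with_a hp0,
      mul_le_mul_of_nonneg_left h_split (mul_nonneg hp0 (sub_nonneg.mpr hp1))]

end

theorem expected_value_random_subset_general {N : Type*} [DecidableEq N]
    (f : Finset N → ℝ)
    (hf : ∀ S T : Finset N, f S + f T ≥ f (S ∪ T) + f (S ∩ T))
    (A : Finset N) (p : ℝ) (hp0 : 0 ≤ p) (hp1 : p ≤ 1) :
    ∑ B ∈ A.powerset, p ^ B.card * (1 - p) ^ (A.card - B.card) * f B ≥
      (1 - p) * f ∅ + p * f A :=
  randomSubsetExpectation_ge_of_submodular hf A hp0 hp1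

/-- for a submodular `f`, a set `A` and a probability `p`,
`E[f(A(p))] ≥ (1 − p)·f(∅) + p·f(A)`, where `A(p)` contains each element of `A`
independently with probability `p`. -/
theorem expected_value_random_subset {N : Type*} [Fintype N] [DecidableEq N]
    (f : Finset N → ℝ)
    (hf : ∀ S T : Finset N, f S + f T ≥ f (S ∪ T) + f (S ∩ T))
    (A : Finset N) (p : ℝ) (hp0 : 0 ≤ p) (hp1 : p ≤ 1) :
    ∑ B ∈ A.powerset, p ^ B.card * (1 - p) ^ (A.card - B.card) * f B ≥
      (1 - p) * f ∅ + p * f A :=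
  expected_value_random_subset_general f hf A p hp0 hp1
end

section
/- Let f : 2^N → ℝ≥0 be a non-negative submodular function, and let R be a random subset of N in which each element appears with probability at most p (not necessarily independently). Then E[f(R)] ≥ (1 − p)·f(∅). -/
/-!
Order the elements as `u₁, …, uₙ` by decreasing marginal probability `p₁ ≥ ⋯ ≥ pₙ` and let
`Aᵢ = {u₁, …, uᵢ}`. Submodularity gives `f(R ∩ Aᵢ) - f(R ∩ Aᵢ₋₁) ≥ [uᵢ ∈ R] (f(Aᵢ) - f(Aᵢ₋₁))`,
so after taking expectations and summing by parts,
`E[f(R)] ≥ (1 - p₁) f(∅) + ∑ᵢ (pᵢ - pᵢ₊₁) f(Aᵢ) ≥ (1 - p) f(∅)` by non-negativity of `f`.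
Formally, elements are added in order of increasing marginal probability, with invariant
`E[f(R ∩ W)] ≥ (1 - p) f(∅) + r f(W)` for any `r ≤ p` below every marginal in `W`.
-/

open Finset

namespace DependentRandomSubset

variable {N : Type*} [DecidableEq N] {f : Finset N → ℝ}

theorem inter_insert_le_of_submodular
    (hsub : ∀ S T : Finset N, f S + f T ≥ f (S ∪ T) + f (S ∩ T)) (S s : Finset N) (a : N) :
    f (S ∩ s) + (if a ∈ S then f (insert a s) - f s else 0) ≤ f (S ∩ insert a s) := by
  split_ifs with ha
  · have hunion : S ∩ insert a s ∪ s = insert a s := by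
      ext x; by_cases hx : x = a <;> simp_all
    have hinter : S ∩ insert a s ∩ s = S ∩ s := by
      ext x; by_cases hx : x = a <;> simp_all
    have := hsub (S ∩ insert a s) s
    rw [hunion, hinter] at this
    linarith
  · rw [inter_insert_of_notMem ha, add_zero]

variable [Fintype N] {μ : Finset N → ℝ}

theorem expectation_inter_insert_ge (hμ0 : ∀ S, 0 ≤ μ S)
    (hsub : ∀ S T : Finset N, f S + f T ≥ f (S ∪ T) + f (S ∩ T)) (s : Finset N) (a : N) :
    ∑ S : Finset N, μ S * f (S ∩ s)
        + (∑ S ∈ (univ : Finset (Finset N)).filter (fun S => a ∈ S), μ S) * (f (insert a s) - f s)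
      ≤ ∑ S : Finset N, μ S * f (S ∩ insert a s) := by
  rw [sum_filter, sum_mul, ← sum_add_distrib]
  refine sum_le_sum fun S _ => ?_
  have := mul_le_mul_of_nonneg_left (inter_insert_le_of_submodular hsub S s a) (hμ0 S)
  split_ifs at this ⊢ <;> linarith

theorem expectation_inter_ge (hnonneg : ∀ S : Finset N, 0 ≤ f S)
    (hsub : ∀ S T : Finset N, f S + f T ≥ f (S ∪ T) + f (S ∩ T))
    (hμ0 : ∀ S, 0 ≤ μ S) (hμ1 : ∑ S : Finset N, μ S = 1) {p : ℝ}
    (hmarg : ∀ u : N, ∑ S ∈ (univ : Finset (Finset N)).filter (fun S => u ∈ S), μ S ≤ p)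
    (W : Finset N) {r : ℝ} (hrp : r ≤ p)
    (hrW : ∀ u ∈ W, r ≤ ∑ S ∈ (univ : Finset (Finset N)).filter (fun S => u ∈ S), μ S) :
    (1 - p) * f ∅ + r * f W ≤ ∑ S : Finset N, μ S * f (S ∩ W) := by
  induction W using
    induction_on_min_value (fun u => ∑ S ∈ (univ : Finset (Finset N)).filter (fun S => u ∈ S), μ S)
    generalizing r with
  | empty =>
    simp only [inter_empty, ← sum_mul, hμ1, one_mul]
    nlinarith [hnonneg ∅]
  | insert a s _ hmin ih =>
    set q := ∑ S ∈ (univ : Finset (Finset N)).filter (fun S => a ∈ S), μ S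
    have hs : (1 - p) * f ∅ + q * f s ≤ ∑ S : Finset N, μ S * f (S ∩ s) :=
      ih (hmarg a) hmin
    have hra : r * f (insert a s) ≤ q * f (insert a s) :=
      mul_le_mul_of_nonneg_right (hrW a (mem_insert_self a s)) (hnonneg _)
    linarith [expectation_inter_insert_ge hμ0 hsub s a]

end DependentRandomSubset

open DependentRandomSubset in
theorem expected_value_dependent_random_subset_general {N : Type*} [Fintype N] [DecidableEq N]
    (f : Finset N → ℝ)
    (hnonneg : ∀ S : Finset N, 0 ≤ f S)
    (hsub : ∀ S T : Finset N, f S + f T ≥ f (S ∪ T) + f (S ∩ T))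
    (μ : Finset N → ℝ) (hμ0 : ∀ S, 0 ≤ μ S) (hμ1 : ∑ S : Finset N, μ S = 1)
    (p : ℝ) (hp0 : 0 ≤ p)
    (hmarg : ∀ u : N, ∑ S ∈ (Finset.univ : Finset (Finset N)).filter (fun S => u ∈ S), μ S ≤ p) :
    ∑ S : Finset N, μ S * f S ≥ (1 - p) * f ∅ := by
  have h := expectation_inter_ge hnonneg hsub hμ0 hμ1 hmarg univ hp0
    fun u _ => sum_nonneg fun S _ => hμ0 S
  simpa only [inter_univ, zero_mul, add_zero] using h

/-- for a non-negative submodular `f` and a random set `R` (with an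
arbitrary joint distribution `μ`) in which each element appears with probability
at most `p`, `E[f(R)] ≥ (1 − p)·f(∅)`. -/
theorem expected_value_dependent_random_subset {N : Type*} [Fintype N] [DecidableEq N]
    (f : Finset N → ℝ)
    (hnonneg : ∀ S : Finset N, 0 ≤ f S)
    (hsub : ∀ S T : Finset N, f S + f T ≥ f (S ∪ T) + f (S ∩ T))
    (μ : Finset N → ℝ) (hμ0 : ∀ S, 0 ≤ μ S) (hμ1 : ∑ S : Finset N, μ S = 1)
    (p : ℝ) (hp0 : 0 ≤ p) (hp1 : p ≤ 1)
    (hmarg : ∀ u : N, ∑ S ∈ (Finset.univ : Finset (Finset N)).filter (fun S => u ∈ S), μ S ≤ p) :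
    ∑ S : Finset N, μ S * f S ≥ (1 - p) * f ∅ :=
  expected_value_dependent_random_subset_general f hnonneg hsub μ hμ0 hμ1 p hp0 hmarg
end

section
/- Let f : 2^N → ℝ≥0 be a non-negative submodular function, let A_1, …, A_ℓ be ℓ ≥ 2 pairwise disjoint subsets of N, and let 1 ≤ h ≤ ℓ be an integer. If R(A, h) denotes the union of h of the sets A_1, …, A_ℓ chosen uniformly at random without replacement, then E[f(R(A, h))] ≥ (1 − (h−1)/(ℓ−1)) · (Σ_{i=1}^ℓ f(A_i))/ℓ. -/
/-!
Put `g I = f (⋃ i ∈ I, A i)` for `I ⊆ {1, …, ℓ}`; disjointness of the `A i` makes `g` submodular.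
Let `φ k` be the mean of `g` over the `k`-subsets. For each `k`-set `T`, submodularity gives
`g univ - g T ≤ ∑ i ∉ T, (g (T ∪ {i}) - g T)`, and with `g univ ≥ 0` and double counting of the
pairs `(T, i)` this averages to `(ℓ - k - 1) φ k ≤ (ℓ - k) φ (k + 1)`. Hence `φ k / (ℓ - k)` is
nondecreasing for `k < ℓ`, and comparing `k = h` with `k = 1` gives `φ h ≥ (ℓ - h) / (ℓ - 1) · φ 1`.
-/

open Finset Function

def IsSubmodular {ι : Type*} [DecidableEq ι] (g : Finset ι → ℝ) : Prop :=
  ∀ S T : Finset ι, g (S ∪ T) + g (S ∩ T) ≤ g S + g T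

section

variable {ι : Type*} [DecidableEq ι]

theorem IsSubmodular.comp_biUnion {N : Type*} [DecidableEq N] {f : Finset N → ℝ}
    (hf : IsSubmodular f) {A : ι → Finset N} (hA : Pairwise (Disjoint on A)) :
    IsSubmodular fun I => f (I.biUnion A) := by
  intro S T
  have hinter : (S ∩ T).biUnion A = S.biUnion A ∩ T.biUnion A := by
    ext x
    simp only [mem_biUnion, mem_inter]
    constructor
    · rintro ⟨a, ⟨haS, haT⟩, hx⟩
      exact ⟨⟨a, haS, hx⟩, a, haT, hx⟩
    · rintro ⟨⟨a, haS, hxa⟩, b, hbT, hxb⟩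
      obtain rfl : a = b := by
        by_contra hab
        exact disjoint_left.mp (hA hab) hxa hxb
      exact ⟨a, ⟨haS, hbT⟩, hxa⟩
  simpa only [union_biUnion, hinter] using hf (S.biUnion A) (T.biUnion A)

theorem IsSubmodular.sub_le_sum_sub {g : Finset ι → ℝ} (hg : IsSubmodular g) (T s : Finset ι) :
    g (T ∪ s) - g T ≤ ∑ i ∈ s, (g (insert i T) - g T) := by
  induction s using Finset.induction_on with
  | empty => simp
  | insert a s ha ih =>
    -- diminishing returns: adding `a` to `T ∪ s` gains at most what adding it to `T` gains
    have hstep := hg (insert a T) (T ∪ s)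
    rw [show insert a T ∪ (T ∪ s) = T ∪ insert a s by grind,
      show insert a T ∩ (T ∪ s) = T by grind] at hstep
    rw [sum_insert ha]
    linarith

theorem sum_powersetCard_sum_sdiff_insert {β : Type*} [AddCommMonoid β] (u : Finset ι) (m : ℕ)
    (g : Finset ι → β) :
    ∑ T ∈ u.powersetCard m, ∑ i ∈ u \ T, g (insert i T) =
      (m + 1) • ∑ J ∈ u.powersetCard (m + 1), g J := by
  calc ∑ T ∈ u.powersetCard m, ∑ i ∈ u \ T, g (insert i T)
      = ∑ J ∈ u.powersetCard (m + 1), ∑ _i ∈ J, g J := by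
        rw [sum_sigma', sum_sigma']
        refine sum_nbij' (fun p => ⟨insert p.2 p.1, p.2⟩) (fun p => ⟨p.1.erase p.2, p.2⟩)
          ?_ ?_ ?_ ?_ ?_ <;> rintro ⟨T, i⟩ hp <;>
          simp only [mem_sigma, mem_powersetCard, mem_sdiff] at hp ⊢
        · grind [card_insert_of_notMem]
        · grind [card_erase_of_mem]
        · simp [erase_insert hp.2.2]
        · simp [insert_erase hp.2]
    _ = (m + 1) • ∑ J ∈ u.powersetCard (m + 1), g J := by
        rw [smul_sum]
        exact sum_congr rfl fun J hJ => by rw [sum_const, (mem_powersetCard.1 hJ).2]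

end

noncomputable def powersetCardMean {ι : Type*} [Fintype ι] (g : Finset ι → ℝ) (k : ℕ) : ℝ :=
  (∑ I ∈ (univ : Finset ι).powersetCard k, g I) / (Fintype.card ι).choose k

section

variable {ι : Type*} [Fintype ι] {g : Finset ι → ℝ}

theorem powersetCardMean_one (g : Finset ι → ℝ) :
    powersetCardMean g 1 = (∑ i, g {i}) / Fintype.card ι := by
  simp [powersetCardMean, powersetCard_one, sum_map]

variable [DecidableEq ι]

theorem IsSubmodular.sub_mul_sum_powersetCard_le (hg : IsSubmodular g) (hg_univ : 0 ≤ g univ)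
    (m : ℕ) :
    ((Fintype.card ι : ℝ) - m - 1) * ∑ T ∈ (univ : Finset ι).powersetCard m, g T ≤
      (m + 1) * ∑ J ∈ (univ : Finset ι).powersetCard (m + 1), g J := by
  have hcount := sum_powersetCard_sum_sdiff_insert univ m g
  rw [nsmul_eq_mul] at hcount
  push_cast at hcount
  rw [← hcount, mul_sum]
  refine sum_le_sum fun T hT => ?_
  have hmarginal := hg.sub_le_sum_sub T (univ \ T)
  have hcard : (#T : ℝ) = m := by exact_mod_cast (mem_powersetCard.1 hT).2
  rw [union_sdiff_of_subset (subset_univ T), sum_sub_distrib, sum_const, card_univ_sdiff,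
    nsmul_eq_mul, Nat.cast_sub (card_le_univ T), hcard] at hmarginal
  linarith

theorem IsSubmodular.sub_mul_powersetCardMean_le (hg : IsSubmodular g) (hg_univ : 0 ≤ g univ)
    {m : ℕ} (hm : m < Fintype.card ι) :
    ((Fintype.card ι : ℝ) - m - 1) * powersetCardMean g m ≤
      ((Fintype.card ι : ℝ) - m) * powersetCardMean g (m + 1) := by
  unfold powersetCardMean
  set n := Fintype.card ι
  have hchoose : ((m : ℝ) + 1) * n.choose (m + 1) = (n - m) * n.choose m := by
    have := congrArg (Nat.cast : ℕ → ℝ) (Nat.choose_succ_right_eq n m)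
    push_cast [Nat.cast_sub hm.le] at this
    linarith
  have hpos : (0 : ℝ) < n.choose m := by exact_mod_cast Nat.choose_pos hm.le
  have hpos' : (0 : ℝ) < n.choose (m + 1) := by exact_mod_cast Nat.choose_pos hm
  rw [mul_div_assoc', div_le_iff₀ hpos]
  calc _ ≤ (m + 1) * ∑ J ∈ (univ : Finset ι).powersetCard (m + 1), g J :=
        hg.sub_mul_sum_powersetCard_le hg_univ m
    _ = _ := by
        field_simp
        linear_combination (∑ J ∈ (univ : Finset ι).powersetCard (m + 1), g J) * hchoose

theorem IsSubmodular.sub_mul_powersetCardMean_one_le (hg : IsSubmodular g)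
    (hg_univ : 0 ≤ g univ) {h : ℕ} (h1 : 1 ≤ h) (hh : h ≤ Fintype.card ι) :
    ((Fintype.card ι : ℝ) - h) * powersetCardMean g 1 ≤
      ((Fintype.card ι : ℝ) - 1) * powersetCardMean g h := by
  set n := Fintype.card ι
  induction h, h1 using Nat.le_induction with
  | base => simp
  | succ h h1 ih =>
    have hlt : h < n := by omega
    have ih := ih hlt.le
    have hstep := hg.sub_mul_powersetCardMean_le hg_univ hlt
    have hgap : (0 : ℝ) < n - h := by
      have : (h : ℝ) < n := by exact_mod_cast hlt
      linarith
    have hn1 : (0 : ℝ) ≤ n - 1 := by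
      have : (1 : ℝ) ≤ n := by exact_mod_cast h1.trans hlt.le
      linarith
    have hgap' : (0 : ℝ) ≤ n - h - 1 := by
      have : (h : ℝ) + 1 ≤ n := by exact_mod_cast hlt
      linarith
    refine le_of_mul_le_mul_left ?_ hgap
    push_cast
    calc ((n : ℝ) - h) * ((n - (h + 1)) * powersetCardMean g 1)
        = (n - h - 1) * ((n - h) * powersetCardMean g 1) := by ring
      _ ≤ (n - h - 1) * ((n - 1) * powersetCardMean g h) := by gcongr
      _ = (n - 1) * ((n - h - 1) * powersetCardMean g h) := by ring
      _ ≤ (n - 1) * ((n - h) * powersetCardMean g (h + 1)) := by gcongr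
      _ = (n - h) * ((n - 1) * powersetCardMean g (h + 1)) := by ring

end

theorem expected_value_disjoint_unions_general {N : Type*} [DecidableEq N]
    (f : Finset N → ℝ)
    (hnonneg : ∀ S : Finset N, 0 ≤ f S)
    (hsub : ∀ S T : Finset N, f S + f T ≥ f (S ∪ T) + f (S ∩ T))
    (ℓ : ℕ) (hℓ : 2 ≤ ℓ) (A : Fin ℓ → Finset N)
    (hdisj : ∀ i j : Fin ℓ, i ≠ j → Disjoint (A i) (A j))
    (h : ℕ) (hh1 : 1 ≤ h) (hhℓ : h ≤ ℓ) :
    (∑ I ∈ (Finset.univ : Finset (Fin ℓ)).powersetCard h, f (I.biUnion A)) /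
        (Nat.choose ℓ h : ℝ) ≥
      (1 - ((h : ℝ) - 1) / ((ℓ : ℝ) - 1)) * ((∑ i : Fin ℓ, f (A i)) / (ℓ : ℝ)) := by
  have hg : IsSubmodular fun I : Finset (Fin ℓ) => f (I.biUnion A) :=
    IsSubmodular.comp_biUnion hsub hdisj
  have hbound := hg.sub_mul_powersetCardMean_one_le (hnonneg _) hh1 (by simpa using hhℓ)
  simp only [powersetCardMean_one, singleton_biUnion, Fintype.card_fin] at hbound
  have hℓ1 : (0 : ℝ) < ℓ - 1 := by
    have : (2 : ℝ) ≤ ℓ := by exact_mod_cast hℓ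
    linarith
  rw [ge_iff_le, one_sub_div hℓ1.ne', div_mul_eq_mul_div, div_le_iff₀ hℓ1]
  simpa [powersetCardMean, sub_sub_sub_cancel_right, mul_comm] using hbound

/-- for a non-negative submodular `f`, pairwise disjoint sets
`A 0, …, A (ℓ-1)` with `ℓ ≥ 2`, and `1 ≤ h ≤ ℓ`, the expected value of the union of a
uniformly random size-`h` subcollection satisfies
`E[f(R(A, h))] ≥ (1 − (h−1)/(ℓ−1)) · (Σ_i f(A_i))/ℓ`. -/
theorem expected_value_disjoint_unions {N : Type*} [Fintype N] [DecidableEq N]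
    (f : Finset N → ℝ)
    (hnonneg : ∀ S : Finset N, 0 ≤ f S)
    (hsub : ∀ S T : Finset N, f S + f T ≥ f (S ∪ T) + f (S ∩ T))
    (ℓ : ℕ) (hℓ : 2 ≤ ℓ) (A : Fin ℓ → Finset N)
    (hdisj : ∀ i j : Fin ℓ, i ≠ j → Disjoint (A i) (A j))
    (h : ℕ) (hh1 : 1 ≤ h) (hhℓ : h ≤ ℓ) :
    (∑ I ∈ (Finset.univ : Finset (Fin ℓ)).powersetCard h, f (I.biUnion A)) /
        (Nat.choose ℓ h : ℝ) ≥
      (1 - ((h : ℝ) - 1) / ((ℓ : ℝ) - 1)) * ((∑ i : Fin ℓ, f (A i)) / (ℓ : ℝ)) :=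
  expected_value_disjoint_unions_general f hnonneg hsub ℓ hℓ A hdisj h hh1 hhℓ
end

section
/- Let f : 2^N → ℝ≥0 be a non-negative submodular function on a ground set N of size n, and let 1 ≤ k ≤ n/2. Let OPT be a set of size k maximizing f among sets of size k, and let u* maximize f({u}) over u ∈ N. Then f(OPT) ≥ f({u*})/2. -/
open Finset

/-! Remove `u` from the ground set; since `2k ≤ n`, what is left contains two disjoint sets
`A`, `B` of size `k - 1`. Adding `u` to each gives two feasible sets whose intersection is `{u}`,
so submodularity and non-negativity give `f {u} ≤ f (A + u) + f (B + u) ≤ 2 f(OPT)`. -/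

theorem Finset.exists_disjoint_subsets_card_eq {α : Type*} [DecidableEq α] {s : Finset α}
    {m : ℕ} (hm : 2 * m ≤ #s) :
    ∃ A ⊆ s, ∃ B ⊆ s, Disjoint A B ∧ #A = m ∧ #B = m := by
  obtain ⟨A, hAs, hA⟩ := exists_subset_card_eq (show m ≤ #s by omega)
  have hrest : m ≤ #(s \ A) := by rw [card_sdiff_of_subset hAs]; omega
  obtain ⟨B, hBs, hB⟩ := exists_subset_card_eq hrest
  exact ⟨A, hAs, B, hBs.trans sdiff_subset, disjoint_of_subset_right hBs disjoint_sdiff, hA, hB⟩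

theorem inter_le_add_of_submodular_of_nonneg {α : Type*} [DecidableEq α] {f : Finset α → ℝ}
    (hnonneg : ∀ S, 0 ≤ f S) (hsub : ∀ S T, f S + f T ≥ f (S ∪ T) + f (S ∩ T))
    (S T : Finset α) : f (S ∩ T) ≤ f S + f T := by
  linarith [hsub S T, hnonneg (S ∪ T)]

theorem opt_not_too_bad_general {N : Type*} [Fintype N] [DecidableEq N]
    (f : Finset N → ℝ)
    (hnonneg : ∀ S : Finset N, 0 ≤ f S)
    (hsub : ∀ S T : Finset N, f S + f T ≥ f (S ∪ T) + f (S ∩ T))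
    (k : ℕ) (hk1 : 1 ≤ k) (hkn : 2 * k ≤ Fintype.card N)
    (OPT : Finset N)
    (hOPTmax : ∀ S : Finset N, S.card = k → f S ≤ f OPT)
    (u : N) :
    f OPT ≥ f {u} / 2 := by
  have hrest : 2 * (k - 1) ≤ #(univ.erase u) := by
    rw [card_erase_of_mem (mem_univ u), card_univ]; omega
  obtain ⟨A, hA, B, hB, hAB, hAcard, hBcard⟩ := exists_disjoint_subsets_card_eq hrest
  have hcard {C : Finset N} (hC : C ⊆ univ.erase u) (hCcard : #C = k - 1) : #(insert u C) = k := by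
    rw [card_insert_of_notMem fun h => (mem_erase.mp (hC h)).1 rfl]; omega
  have hinter : insert u A ∩ insert u B = {u} := by
    rw [← insert_inter_distrib, disjoint_iff_inter_eq_empty.mp hAB, insert_empty]
  have hsingleton := inter_le_add_of_submodular_of_nonneg hnonneg hsub (insert u A) (insert u B)
  rw [hinter] at hsingleton
  linarith [hOPTmax _ (hcard hA hAcard), hOPTmax _ (hcard hB hBcard)]

/-- for a non-negative submodular `f` on a ground set of size `n`, a
cardinality parameter `1 ≤ k` with `2k ≤ n`, a maximizer `OPT` of `f` among size-`k`
sets, and an element `u⋆` maximizing `f` among singletons, `f(OPT) ≥ f({u⋆})/2`. -/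
theorem opt_not_too_bad {N : Type*} [Fintype N] [DecidableEq N]
    (f : Finset N → ℝ)
    (hnonneg : ∀ S : Finset N, 0 ≤ f S)
    (hsub : ∀ S T : Finset N, f S + f T ≥ f (S ∪ T) + f (S ∩ T))
    (k : ℕ) (hk1 : 1 ≤ k) (hkn : 2 * k ≤ Fintype.card N)
    (OPT : Finset N) (hOPTcard : OPT.card = k)
    (hOPTmax : ∀ S : Finset N, S.card = k → f S ≤ f OPT)
    (u : N) (hu : ∀ v : N, f {v} ≤ f {u}) :
    f OPT ≥ f {u} / 2 :=
  opt_not_too_bad_general f hnonneg hsub k hk1 hkn OPT hOPTmax u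
end

section
/- Let f : 2^N → ℝ be submodular with multilinear extension F, and let y¹, y² ∈ [0,1]^N be fixed vectors with y¹ ≤ y² coordinate-wise. Then the function r : [0,1] → ℝ defined by r(x) = F(y¹ + x·(y² − y¹)) is concave. -/
/-!
Give every `u ∈ N` an independent random label in `Fin 4`, equal to `0, 1, 2, 3` with
probabilities `x u, d u, y u - x u, 1 - y u - d u`. The elements labelled in `{0, 1}`, `{0, 2}`,
`{0, 1, 2}`, `{0}` then form random sets distributed as `R(x + d)`, `R(y)`, `R(y + d)`, `R(x)`,
and the last two are the union and the intersection of the first two; applying submodularity to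
every outcome gives `F(y + d) - F(y) ≤ F(x + d) - F(x)` whenever `0 ≤ x ≤ y` and `d ≥ 0`.
Along the segment this says that `r` has antitone increments, hence (being a polynomial) an
antitone derivative, so it is concave.
-/

open Finset

theorem concaveOn_Icc_of_sub_antitone {r : ℝ → ℝ} {a b : ℝ} (hr : Differentiable ℝ r)
    (hinc : ∀ s t h, a ≤ s → s ≤ t → 0 < h → t + h ≤ b → r (t + h) - r t ≤ r (s + h) - r s) :
    ConcaveOn ℝ (Set.Icc a b) r := by
  refine AntitoneOn.concaveOn_of_deriv (convex_Icc a b) hr.continuous.continuousOn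
    hr.differentiableOn ?_
  rw [interior_Icc]
  intro s hs t ht hst
  refine le_of_tendsto_of_tendsto (hr t).hasDerivAt.tendsto_slope_zero_right
    (hr s).hasDerivAt.tendsto_slope_zero_right ?_
  have hsmall : ∀ᶠ h in nhdsWithin (0 : ℝ) (Set.Ioi 0), h < b - t :=
    eventually_nhdsWithin_of_eventually_nhds (eventually_lt_nhds (by linarith [ht.2]))
  filter_upwards [hsmall, self_mem_nhdsWithin] with h hh (hpos : 0 < h)
  exact smul_le_smul_of_nonneg_left (hinc s t h hs.1.le hst hpos (by linarith))
    (inv_nonneg.2 hpos.le)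

section

variable {N : Type*} [Fintype N] [DecidableEq N]

lemma filter_preimage_eq_iff_mem_piFinset {ι : Type*} [Fintype ι] [DecidableEq ι]
    (T : Finset ι) (S : Finset N) (g : N → ι) :
    ({u | g u ∈ T} : Finset N) = S ↔ g ∈ Fintype.piFinset fun u => if u ∈ S then T else Tᶜ := by
  simp only [Finset.ext_iff, mem_filter, mem_univ, true_and, Fintype.mem_piFinset]
  refine forall_congr' fun u => ?_
  by_cases hu : u ∈ S <;> simp [hu]

lemma multilinearExt_sum_eq_sum_pi {ι : Type*} [Fintype ι] [DecidableEq ι] (f : Finset N → ℝ)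
    (w : N → ι → ℝ) (hw : ∀ u, ∑ i, w u i = 1) (T : Finset ι) :
    multilinearExt f (fun u => ∑ i ∈ T, w u i) =
      ∑ g : N → ι, (∏ u, w u (g u)) * f {u | g u ∈ T} := by
  have hcompl : ∀ u, 1 - ∑ i ∈ T, w u i = ∑ i ∈ Tᶜ, w u i := fun u => by
    rw [← hw u, ← sum_compl_add_sum T]; ring
  have hfiber : ∀ S : Finset N, (∏ u ∈ S, ∑ i ∈ T, w u i) * ∏ u ∈ Sᶜ, (1 - ∑ i ∈ T, w u i) =
      ∑ g : N → ι with ({u | g u ∈ T} : Finset N) = S, ∏ u, w u (g u) := fun S => by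
    rw [filter_congr fun g _ => filter_preimage_eq_iff_mem_piFinset T S g, filter_mem_eq_inter,
      univ_inter, ← prod_univ_sum, ← prod_mul_prod_compl S]
    simp_rw [hcompl]
    congr 1 <;> refine prod_congr rfl fun u hu => ?_ <;> simp_all
  rw [multilinearExt, ← sum_fiberwise univ (fun g : N → ι => ({u | g u ∈ T} : Finset N))]
  refine sum_congr rfl fun S _ => ?_
  rw [hfiber, sum_mul]
  exact sum_congr rfl fun g hg => by rw [(mem_filter.1 hg).2]

lemma multilinearExt_union_add_inter_le {ι : Type*} [Fintype ι] [DecidableEq ι]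
    (f : Finset N → ℝ) (hsub : ∀ A B : Finset N, f A + f B ≥ f (A ∪ B) + f (A ∩ B))
    (w : N → ι → ℝ) (hw : ∀ u, ∑ i, w u i = 1) (hw₀ : ∀ u i, 0 ≤ w u i) (T₁ T₂ : Finset ι) :
    multilinearExt f (fun u => ∑ i ∈ T₁ ∪ T₂, w u i) +
        multilinearExt f (fun u => ∑ i ∈ T₁ ∩ T₂, w u i) ≤
      multilinearExt f (fun u => ∑ i ∈ T₁, w u i) +
        multilinearExt f (fun u => ∑ i ∈ T₂, w u i) := by
  simp only [multilinearExt_sum_eq_sum_pi f w hw, ← sum_add_distrib, ← mul_add]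
  refine sum_le_sum fun g _ => mul_le_mul_of_nonneg_left ?_ (prod_nonneg fun u _ => hw₀ u _)
  simpa only [mem_union, mem_inter, filter_or, filter_and] using hsub {u | g u ∈ T₁} {u | g u ∈ T₂}

theorem multilinearExt_add_sub_le_of_le (f : Finset N → ℝ)
    (hsub : ∀ A B : Finset N, f A + f B ≥ f (A ∪ B) + f (A ∩ B))
    {x y d : N → ℝ} (hx : 0 ≤ x) (hxy : x ≤ y) (hd : 0 ≤ d) (hyd : y + d ≤ 1) :
    multilinearExt f (y + d) - multilinearExt f y ≤
      multilinearExt f (x + d) - multilinearExt f x := by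
  let w : N → Fin 4 → ℝ := fun u => ![x u, d u, y u - x u, 1 - y u - d u]
  have hw : ∀ u, ∑ i, w u i = 1 := fun u => by
    simp only [w, Fin.sum_univ_four, Fin.isValue, Matrix.cons_val_zero, Matrix.cons_val_one,
      Matrix.cons_val]
    ring
  have hw₀ : ∀ u i, 0 ≤ w u i := fun u i => by
    have : 0 ≤ x u ∧ x u ≤ y u ∧ 0 ≤ d u ∧ y u + d u ≤ 1 := ⟨hx u, hxy u, hd u, hyd u⟩
    fin_cases i <;>
      simp only [w, Fin.zero_eta, Fin.mk_one, Fin.reduceFinMk, Fin.isValue,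
        Matrix.cons_val_zero, Matrix.cons_val_one, Matrix.cons_val] <;> linarith
  have key := multilinearExt_union_add_inter_le f hsub w hw hw₀ {0, 1} {0, 2}
  rw [show ({0, 1} ∪ {0, 2} : Finset (Fin 4)) = {0, 1, 2} by decide,
    show ({0, 1} ∩ {0, 2} : Finset (Fin 4)) = {0} by decide] at key
  simp only [Fin.isValue, mem_insert, zero_ne_one, mem_singleton, Fin.reduceEq, or_self,
    not_false_eq_true, sum_insert, Matrix.cons_val_zero, Matrix.cons_val_one, sum_singleton,
    Matrix.cons_val, add_sub_cancel, w] at key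
  have hsum : (fun u => x u + (d u + (y u - x u))) = y + d := funext fun u => by
    simp only [Pi.add_apply]; ring
  rw [hsum] at key
  change _ + multilinearExt f x ≤ multilinearExt f (x + d) + multilinearExt f y at key
  linarith

theorem differentiable_multilinearExt (f : Finset N → ℝ) :
    Differentiable ℝ (multilinearExt f) := by
  unfold multilinearExt
  fun_prop

end

/-- for a submodular `f` and fixed vectors `y¹ ≤ y²` in `[0,1]^N`, the
function `r(t) = F(y¹ + t·(y² − y¹))` is concave on `[0,1]`. -/
theorem segment_concave {N : Type*} [Fintype N] [DecidableEq N]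
    (f : Finset N → ℝ)
    (hsub : ∀ A B : Finset N, f A + f B ≥ f (A ∪ B) + f (A ∩ B))
    (y1 y2 : N → ℝ)
    (hy1 : ∀ u, 0 ≤ y1 u ∧ y1 u ≤ 1) (hy2 : ∀ u, 0 ≤ y2 u ∧ y2 u ≤ 1)
    (hle : ∀ u, y1 u ≤ y2 u) :
    ConcaveOn ℝ (Set.Icc (0 : ℝ) 1)
      (fun t => multilinearExt f (fun u => y1 u + t * (y2 u - y1 u))) := by
  refine concaveOn_Icc_of_sub_antitone
    ((differentiable_multilinearExt f).comp (by fun_prop)) fun s t h hs hst hh hth => ?_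
  have hseg : ∀ c : ℝ, (fun u => y1 u + c * (y2 u - y1 u)) + (fun u => h * (y2 u - y1 u)) =
      fun u => y1 u + (c + h) * (y2 u - y1 u) := fun c => funext fun u => by
    simp only [Pi.add_apply]; ring
  have := multilinearExt_add_sub_le_of_le f hsub (x := fun u => y1 u + s * (y2 u - y1 u))
    (y := fun u => y1 u + t * (y2 u - y1 u)) (d := fun u => h * (y2 u - y1 u))
    (fun u => by simp only [Pi.zero_apply]; nlinarith [hy1 u, hle u])
    (fun u => by nlinarith [hle u])
    (fun u => by simp only [Pi.zero_apply]; nlinarith [hle u])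
    (fun u => by simp only [hseg, Pi.one_apply]; nlinarith [hy1 u, hy2 u, hle u])
  rwa [hseg, hseg] at this
end

section
/- Consider the deterministic two-sided greedy on a symmetric non-negative submodular f: X_0 = ∅, Y_0 = N; at step i, with a_i = f(X_{i−1} + u_i) − f(X_{i−1}) and b_i = f(Y_{i−1} − u_i) − f(Y_{i−1}), set X_i = X_{i−1} + u_i and Y_i = Y_{i−1} if a_i ≥ b_i, and X_i = X_{i−1}, Y_i = Y_{i−1} − u_i otherwise. Define OPT_i = (OPT ∪ X_i) ∩ Y_i and ŌPT_i = (ŌPT ∪ X_i) ∩ Y_i where ŌPT = N \ OPT. Then for every 1 ≤ i ≤ n: [f(OPT_{i−1}) − f(OPT_i)] + [f(ŌPT_{i−1}) − f(ŌPT_i)] ≤ [f(X_i) − f(X_{i−1})] + [f(Y_i) − f(Y_{i−1})]. -/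
/-! Write `S_O = (O ∪ X) ∩ Y`. Adding `u` to `X` turns `S_O` into `insert u S_O`, and removing
`u` from `Y` turns it into `S_O.erase u`. Exactly one of `OPT`, `OPTᶜ` contains `u`. When `u` is
added, that set loses nothing and, by diminishing returns against `S_O ⊆ Y.erase u`, the other
loses at most `b ≤ a`. When `u` is removed, the other set loses nothing and, by diminishing
returns against `X ⊆ S_O.erase u`, the one containing `u` loses at most `a < b`. -/

open Finset

section Submodular

variable {α : Type*} [DecidableEq α] {f : Finset α → ℝ}

theorem sub_insert_le_sub_insert_of_subset
    (hsub : ∀ A B : Finset α, f A + f B ≥ f (A ∪ B) + f (A ∩ B))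
    {S T : Finset α} {u : α} (hST : S ⊆ T) (huT : u ∉ T) :
    f (insert u T) - f T ≤ f (insert u S) - f S := by
  have h := hsub (insert u S) T
  rw [insert_union, union_eq_right.mpr hST, insert_inter_of_notMem huT,
    inter_eq_left.mpr hST] at h
  linarith

theorem sub_sub_insert_le_sub_erase
    (hsub : ∀ A B : Finset α, f A + f B ≥ f (A ∪ B) + f (A ∩ B))
    {S Y : Finset α} {u : α} (hSY : S ⊆ Y) (huS : u ∉ S) (huY : u ∈ Y) :
    f S - f (insert u S) ≤ f (Y.erase u) - f Y := by
  have h := sub_insert_le_sub_insert_of_subset hsub (subset_erase.mpr ⟨hSY, huS⟩)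
    (notMem_erase u Y)
  rw [insert_erase huY] at h
  linarith

theorem sub_sub_erase_le_sub_insert
    (hsub : ∀ A B : Finset α, f A + f B ≥ f (A ∪ B) + f (A ∩ B))
    {X S : Finset α} {u : α} (hXS : X ⊆ S) (huX : u ∉ X) (huS : u ∈ S) :
    f S - f (S.erase u) ≤ f (insert u X) - f X := by
  have h := sub_insert_le_sub_insert_of_subset hsub (subset_erase.mpr ⟨hXS, huX⟩)
    (notMem_erase u S)
  rw [insert_erase huS] at h
  linarith

theorem greedy_step_loss_le
    (hsub : ∀ A B : Finset α, f A + f B ≥ f (A ∪ B) + f (A ∩ B))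
    {X Y X' Y' P Q : Finset α} {u : α}
    (hXY : X ⊆ Y) (huX : u ∉ X) (huY : u ∈ Y) (huP : u ∈ P) (huQ : u ∉ Q)
    (hstep : if f (insert u X) - f X ≥ f (Y.erase u) - f Y
      then X' = insert u X ∧ Y' = Y
      else X' = X ∧ Y' = Y.erase u) :
    (f ((P ∪ X) ∩ Y) - f ((P ∪ X') ∩ Y')) + (f ((Q ∪ X) ∩ Y) - f ((Q ∪ X') ∩ Y')) ≤
      (f X' - f X) + (f Y' - f Y) := by
  have huQX : u ∉ Q ∪ X := by simp [huQ, huX]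
  split_ifs at hstep with hab
  · obtain ⟨rfl, rfl⟩ := hstep
    have hQ := sub_sub_insert_le_sub_erase hsub inter_subset_right
      (fun h => huQX (mem_inter.mp h).1) huY
    rw [union_insert, insert_inter_of_mem huY, union_insert, insert_inter_of_mem huY,
      insert_eq_of_mem (mem_inter.mpr ⟨mem_union_left _ huP, huY⟩)]
    linarith
  · obtain ⟨rfl, rfl⟩ := hstep
    have hP := sub_sub_erase_le_sub_insert hsub
      (fun x hx => mem_inter.mpr ⟨mem_union_right _ hx, hXY hx⟩) huX
      (mem_inter.mpr ⟨mem_union_left _ huP, huY⟩)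
    rw [inter_erase, inter_erase, erase_eq_of_notMem (fun h => huQX (mem_inter.mp h).1)]
    linarith

end Submodular

theorem greedy_sets_invariant {n : ℕ} (X Y : ℕ → Finset (Fin n))
    (hX0 : X 0 = ∅) (hY0 : Y 0 = univ)
    (hstep : ∀ i : Fin n, (X (i + 1) = insert i (X i) ∧ Y (i + 1) = Y i) ∨
      (X (i + 1) = X i ∧ Y (i + 1) = (Y i).erase i)) :
    ∀ k ≤ n, X k ⊆ Y k ∧ ∀ j : Fin n, k ≤ (j : ℕ) → j ∉ X k ∧ j ∈ Y k := by
  intro k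
  induction k with
  | zero => simp [hX0, hY0]
  | succ k ih =>
    intro hk
    obtain ⟨hXY, hfresh⟩ := ih (by omega)
    obtain ⟨hkX, hkY⟩ := hfresh ⟨k, hk⟩ le_rfl
    have hne : ∀ j : Fin n, k + 1 ≤ (j : ℕ) → j ≠ ⟨k, hk⟩ := fun j hj h => by
      rw [h] at hj; simp at hj
    rcases hstep ⟨k, hk⟩ with ⟨hX, hY⟩ | ⟨hX, hY⟩ <;> rw [hX, hY]
    · refine ⟨insert_subset hkY hXY, fun j hj => ?_⟩
      simpa [hne j hj] using hfresh j (by omega)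
    · refine ⟨fun x hx => mem_erase.mpr ⟨fun h => hkX (h ▸ hx), hXY hx⟩, fun j hj => ?_⟩
      simpa [hne j hj] using hfresh j (by omega)

theorem two_sided_greedy_loss_gain_bound_general (n : ℕ)
    (f : Finset (Fin n) → ℝ)
    (hsub : ∀ A B : Finset (Fin n), f A + f B ≥ f (A ∪ B) + f (A ∩ B))
    (OPT : Finset (Fin n))
    (X Y : ℕ → Finset (Fin n))
    (hX0 : X 0 = ∅) (hY0 : Y 0 = Finset.univ)
    (hstep : ∀ i : Fin n,
      if f (insert i (X i)) - f (X i) ≥ f ((Y i).erase i) - f (Y i)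
      then X (i + 1) = insert i (X i) ∧ Y (i + 1) = Y i
      else X (i + 1) = X i ∧ Y (i + 1) = (Y i).erase i) :
    ∀ i : Fin n,
      (f ((OPT ∪ X i) ∩ Y i) - f ((OPT ∪ X (i + 1)) ∩ Y (i + 1))) +
        (f ((OPTᶜ ∪ X i) ∩ Y i) - f ((OPTᶜ ∪ X (i + 1)) ∩ Y (i + 1))) ≤
      (f (X (i + 1)) - f (X i)) + (f (Y (i + 1)) - f (Y i)) := by
  intro i
  have hchoice : ∀ j : Fin n, (X (j + 1) = insert j (X j) ∧ Y (j + 1) = Y j) ∨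
      (X (j + 1) = X j ∧ Y (j + 1) = (Y j).erase j) := fun j => by
    have h := hstep j
    split_ifs at h <;> simp [h]
  obtain ⟨hXY, hfresh⟩ := greedy_sets_invariant X Y hX0 hY0 hchoice i i.is_lt.le
  obtain ⟨hiX, hiY⟩ := hfresh i le_rfl
  by_cases hi : i ∈ OPT
  · exact greedy_step_loss_le hsub hXY hiX hiY hi (notMem_compl.mpr hi) (hstep i)
  · have h := greedy_step_loss_le hsub hXY hiX hiY (mem_compl.mpr hi) hi (hstep i)
    linarith

/-- the key inequality for the deterministic two-sided greedy on a
symmetric non-negative submodular function. The ground set is `Fin n`, with element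
`i` processed at step `i + 1`. At each step, with `a = f(X_{i-1}+u_i)−f(X_{i-1})` and
`b = f(Y_{i-1}−u_i)−f(Y_{i-1})`, the algorithm adds `u_i` to `X` if `a ≥ b` and
otherwise removes it from `Y`. With `OPT_j = (OPT ∪ X_j) ∩ Y_j` and
`ŌPT_j = (ŌPT ∪ X_j) ∩ Y_j`, the decrease of `f(OPT_j) + f(ŌPT_j)` at every step is at
most the increase of `f(X_j) + f(Y_j)`. -/
theorem two_sided_greedy_loss_gain_bound (n : ℕ)
    (f : Finset (Fin n) → ℝ)
    (hnonneg : ∀ S, 0 ≤ f S)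
    (hsym : ∀ S : Finset (Fin n), f S = f Sᶜ)
    (hsub : ∀ A B : Finset (Fin n), f A + f B ≥ f (A ∪ B) + f (A ∩ B))
    (OPT : Finset (Fin n))
    (X Y : ℕ → Finset (Fin n))
    (hX0 : X 0 = ∅) (hY0 : Y 0 = Finset.univ)
    (hstep : ∀ i : Fin n,
      if f (insert i (X i)) - f (X i) ≥ f ((Y i).erase i) - f (Y i)
      then X (i + 1) = insert i (X i) ∧ Y (i + 1) = Y i
      else X (i + 1) = X i ∧ Y (i + 1) = (Y i).erase i) :
    ∀ i : Fin n,
      (f ((OPT ∪ X i) ∩ Y i) - f ((OPT ∪ X (i + 1)) ∩ Y (i + 1))) +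
        (f ((OPTᶜ ∪ X i) ∩ Y i) - f ((OPTᶜ ∪ X (i + 1)) ∩ Y (i + 1))) ≤
      (f (X (i + 1)) - f (X i)) + (f (Y (i + 1)) - f (Y i)) :=
  two_sided_greedy_loss_gain_bound_general n f hsub OPT X Y hX0 hY0 hstep
end

section
/- Let g, h : {0, δ, 2δ, …} → ℝ be defined for a step size δ ∈ (0, 1/2] and a constant V ≥ 0 by g(0) = 0 and g(t + δ) = g(t) + δ·(V − 2·g(t)), and h(t) = (1/2)·(1 − e^{−2t})·V. Then g(t) ≥ h(t) for every t in {0, δ, 2δ, …}. -/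
/-!
The recursion is affine with contraction factor `1 - 2δ`, so `g m = (V / 2) (1 - (1 - 2δ) ^ m)`.
Since `0 ≤ 1 - 2δ ≤ e^{-2δ}`, raising to the `m`-th power gives `(1 - 2δ) ^ m ≤ e^{-2mδ}`.
-/

open Real

theorem affine_recurrence_eq {r c : ℝ} {g : ℕ → ℝ} (hg0 : g 0 = 0)
    (hgrec : ∀ m, g (m + 1) = r * g m + (1 - r) * c) (m : ℕ) :
    g m = c * (1 - r ^ m) := by
  induction m with
  | zero => simp [hg0]
  | succ n ih => rw [hgrec, ih, pow_succ]; ring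

theorem one_sub_pow_le_exp_neg_mul {x : ℝ} (hx : x ≤ 1) (m : ℕ) :
    (1 - x) ^ m ≤ exp (-(m * x)) := by
  calc (1 - x) ^ m ≤ exp (-x) ^ m := pow_le_pow_left₀ (by linarith) (one_sub_le_exp_neg x) m
    _ = exp (-(m * x)) := by rw [← exp_nat_mul]; ring_nf

theorem discrete_lower_bound_general (δ V : ℝ) (hδ : δ ≤ 1 / 2) (hV : 0 ≤ V)
    (g : ℕ → ℝ) (hg0 : g 0 = 0)
    (hgrec : ∀ m : ℕ, g (m + 1) = g m + δ * (V - 2 * g m)) :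
    ∀ m : ℕ, g m ≥ (1 / 2) * (1 - Real.exp (-2 * ((m : ℝ) * δ))) * V := by
  intro m
  have hclosed : g m = V / 2 * (1 - (1 - 2 * δ) ^ m) :=
    affine_recurrence_eq hg0 (fun n => by rw [hgrec]; ring) m
  have hpow : (1 - 2 * δ) ^ m ≤ exp (-2 * ((m : ℝ) * δ)) := by
    convert one_sub_pow_le_exp_neg_mul (x := 2 * δ) (by linarith) m using 2; ring
  rw [hclosed]
  linarith [mul_le_mul_of_nonneg_left hpow hV]

/-- let `δ ∈ (0, 1/2]` and `V ≥ 0`. If `g` satisfies `g(0) = 0` and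
`g(t + δ) = g(t) + δ·(V − 2·g(t))` on the grid `{0, δ, 2δ, …}` (indexed by the number of
steps `m`, so `t = m·δ`), and `h(t) = (1/2)·(1 − e^{−2t})·V`, then `g(t) ≥ h(t)` at
every grid point. -/
theorem discrete_lower_bound (δ V : ℝ) (hδ0 : 0 < δ) (hδ : δ ≤ 1 / 2) (hV : 0 ≤ V)
    (g : ℕ → ℝ) (hg0 : g 0 = 0)
    (hgrec : ∀ m : ℕ, g (m + 1) = g m + δ * (V - 2 * g m)) :
    ∀ m : ℕ, g m ≥ (1 / 2) * (1 - Real.exp (-2 * ((m : ℝ) * δ))) * V :=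
  discrete_lower_bound_general δ V hδ hV g hg0 hgrec
end
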